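/- arXiv:1404.2688 — 2 statements merged into one kernel-verified Lean document; each statement's English description precedes it below -/
import Mathlib

section
/- Let 1 < q ≤ p < ∞. A measurable function f belongs to B^{p'}_{q'}(ℝⁿ) if and only if there exists g ∈ B^{p'}_{q'}(ℝⁿ) with |f(x)| ≤ g(x) for a.e. x. Moreover in that case ‖f‖_{B^{p'}_{q'}} ≤ ‖g‖_{B^{p'}_{q'}} (the block space is solid). -/
open MeasureTheory ENNReal Set Filter

/-- The open axis-parallel cube with corner `a` and side length `s`. -/
noncomputable def cube (n : ℕ) (a : Fin n → ℝ) (s : ℝ) : Set (Fin n → ℝ) :=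
  Set.univ.pi fun i => Set.Ioo (a i) (a i + s)

/-- The Morrey norm `‖f‖_{M^p_q}` on `ℝⁿ`. -/
noncomputable def morreyNorm (n : ℕ) (p q : ℝ) (f : (Fin n → ℝ) → ℝ) : ℝ≥0∞ :=
  ⨆ (a : Fin n → ℝ) (s : ℝ) (_ : 0 < s),
    ENNReal.ofReal ((s ^ n) ^ (1 / p - 1 / q)) *
      (∫⁻ x in cube n a s, ENNReal.ofReal (|f x| ^ q)) ^ (1 / q)

/-- The Hölder conjugate exponent `p' = p/(p-1)`. -/
noncomputable def conjExp (p : ℝ) : ℝ := p / (p - 1)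

/-- A `(p',q')`-block: a measurable function supported on a cube `Q` with
`‖b‖_{L^{q'}} ≤ |Q|^{1/p-1/q}`. -/
def IsBlock (n : ℕ) (p q : ℝ) (b : (Fin n → ℝ) → ℝ) : Prop :=
  Measurable b ∧ ∃ (a : Fin n → ℝ) (s : ℝ), 0 < s ∧
    Function.support b ⊆ cube n a s ∧
    (∫⁻ x, ENNReal.ofReal (|b x| ^ conjExp q)) ^ (1 / conjExp q) ≤
      ENNReal.ofReal ((s ^ n) ^ (1 / p - 1 / q))

/-- `f = ∑ₖ λₖ bₖ` a.e. with absolutely convergent coefficients and `(p',q')`-blocks. -/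
def IsBlockRep (n : ℕ) (p q : ℝ) (f : (Fin n → ℝ) → ℝ) (l : ℕ → ℝ)
    (b : ℕ → (Fin n → ℝ) → ℝ) : Prop :=
  (∀ k, IsBlock n p q (b k)) ∧ Summable (fun k => |l k|) ∧
    ∀ᵐ x : Fin n → ℝ, Summable (fun k => l k * b k x) ∧ f x = ∑' k, l k * b k x

/-- Membership in the block space `B^{p'}_{q'}(ℝⁿ)`. -/
def MemBlockSpace (n : ℕ) (p q : ℝ) (f : (Fin n → ℝ) → ℝ) : Prop :=
  ∃ l b, IsBlockRep n p q f l b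

/-- The block space norm `‖f‖_{B^{p'}_{q'}}`: infimal `ℓ¹`-sum of coefficients. -/
noncomputable def blockNorm (n : ℕ) (p q : ℝ) (f : (Fin n → ℝ) → ℝ) : ℝ≥0∞ :=
  ⨅ (l : ℕ → ℝ) (b : ℕ → (Fin n → ℝ) → ℝ) (_ : IsBlockRep n p q f l b),
    ENNReal.ofReal (∑' k, |l k|)

/-!
If `g = ∑ λₖ bₖ` and `|f| ≤ g` a.e., then `f = h g` a.e. with `h = f / g` measurable and
`|h| ≤ 1` a.e. (where `g = 0` also `f = 0`, so the junk value `f / 0 = 0` is harmless).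
Multiplying every block by `h` keeps it a block (same cube, smaller `L^{q'}` norm), so
`f = ∑ λₖ (h bₖ)` is a block decomposition of `f` with the same coefficients. Conversely a
decomposition of `f` yields the dominating function `∑ |λₖ| |bₖ|`, decomposed into the blocks `|bₖ|`.
-/

variable {n : ℕ} {p q : ℝ}

lemma conjExp_nonneg (hq : 1 < q) : 0 ≤ conjExp q :=
  div_nonneg (by linarith) (by linarith)

namespace IsBlock

lemma abs {b : (Fin n → ℝ) → ℝ} (hb : IsBlock n p q b) : IsBlock n p q fun x => |b x| := by
  obtain ⟨hm, a, s, hs, hsupp, hnorm⟩ := hb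
  refine ⟨hm.abs, a, s, hs, ?_, by simpa only [abs_abs] using hnorm⟩
  exact (Function.support_comp_eq (|·|) (fun {_} => abs_eq_zero) b).subset.trans hsupp

lemma mul_of_abs_le_one (hq : 0 ≤ conjExp q) {h b : (Fin n → ℝ) → ℝ} (hh : Measurable h)
    (hh1 : ∀ᵐ x, |h x| ≤ 1) (hb : IsBlock n p q b) : IsBlock n p q fun x => h x * b x := by
  obtain ⟨hm, a, s, hs, hsupp, hnorm⟩ := hb
  refine ⟨hh.mul hm, a, s, hs, (Function.support_mul_subset_right h b).trans hsupp,
    le_trans ?_ hnorm⟩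
  refine ENNReal.rpow_le_rpow (lintegral_mono_ae ?_) (by positivity)
  filter_upwards [hh1] with x hx
  refine ENNReal.ofReal_le_ofReal (Real.rpow_le_rpow (abs_nonneg _) ?_ hq)
  rw [abs_mul]
  exact mul_le_of_le_one_left (abs_nonneg _) hx

end IsBlock

namespace IsBlockRep

variable {f g : (Fin n → ℝ) → ℝ} {l : ℕ → ℝ} {b : ℕ → (Fin n → ℝ) → ℝ}

lemma memBlockSpace (hrep : IsBlockRep n p q f l b) : MemBlockSpace n p q f :=
  ⟨l, b, hrep⟩

lemma blockNorm_le (hrep : IsBlockRep n p q f l b) :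
    blockNorm n p q f ≤ ENNReal.ofReal (∑' k, |l k|) :=
  iInf₂_le_of_le l b (iInf_le _ hrep)

lemma congr_ae (hrep : IsBlockRep n p q g l b) (hfg : f =ᵐ[volume] g) :
    IsBlockRep n p q f l b := by
  obtain ⟨hblocks, hsum, hae⟩ := hrep
  refine ⟨hblocks, hsum, ?_⟩
  filter_upwards [hae, hfg] with x hx hfx
  exact ⟨hx.1, hfx.trans hx.2⟩

lemma aemeasurable (hrep : IsBlockRep n p q f l b) : AEMeasurable f := by
  obtain ⟨hblocks, -, hae⟩ := hrep
  refine aemeasurable_of_tendsto_metrizable_ae' (fun N => ?_) (f := fun N x =>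
    ∑ k ∈ Finset.range N, l k * b k x) ?_
  · exact (Finset.measurable_sum _ fun k _ => (hblocks k).1.const_mul (l k)).aemeasurable
  · filter_upwards [hae] with x hx
    exact hx.2 ▸ hx.1.hasSum.tendsto_sum_nat

lemma mul_of_abs_le_one (hq : 0 ≤ conjExp q) {h : (Fin n → ℝ) → ℝ} (hh : Measurable h)
    (hh1 : ∀ᵐ x, |h x| ≤ 1) (hrep : IsBlockRep n p q f l b) :
    IsBlockRep n p q (fun x => h x * f x) l fun k x => h x * b k x := by
  obtain ⟨hblocks, hsum, hae⟩ := hrep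
  refine ⟨fun k => (hblocks k).mul_of_abs_le_one hq hh hh1, hsum, ?_⟩
  filter_upwards [hae] with x hx
  have hcomm : (fun k => l k * (h x * b k x)) = fun k => h x * (l k * b k x) :=
    funext fun k => mul_left_comm _ _ _
  rw [hcomm, tsum_mul_left, hx.2]
  exact ⟨hx.1.mul_left (h x), rfl⟩

lemma abs (hrep : IsBlockRep n p q f l b) :
    IsBlockRep n p q (fun x => ∑' k, |l k| * |b k x|) (fun k => |l k|) fun k x => |b k x| := by
  obtain ⟨hblocks, hsum, hae⟩ := hrep
  refine ⟨fun k => (hblocks k).abs, by simpa only [abs_abs] using hsum, ?_⟩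
  filter_upwards [hae] with x hx
  exact ⟨by simpa only [abs_mul] using hx.1.abs, rfl⟩

lemma abs_le (hrep : IsBlockRep n p q f l b) : ∀ᵐ x, |f x| ≤ ∑' k, |l k| * |b k x| := by
  filter_upwards [hrep.2.2] with x hx
  rw [hx.2]
  calc |∑' k, l k * b k x| ≤ ∑' k, |l k * b k x| := by
        simpa only [Real.norm_eq_abs] using norm_tsum_le_tsum_norm hx.1.norm
    _ = ∑' k, |l k| * |b k x| := tsum_congr fun k => abs_mul _ _

lemma of_abs_le (hq : 0 ≤ conjExp q) (hf : Measurable f) (hrep : IsBlockRep n p q g l b)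
    (hfg : ∀ᵐ x, |f x| ≤ g x) : ∃ c, IsBlockRep n p q f l c := by
  set G := hrep.aemeasurable.mk g
  have hgG : g =ᵐ[volume] G := hrep.aemeasurable.ae_eq_mk
  have hfG : ∀ᵐ x, |f x| ≤ |G x| := by
    filter_upwards [hfg, hgG] with x hx hGx
    exact hGx ▸ hx.trans (le_abs_self _)
  refine ⟨_, (hrep.mul_of_abs_le_one hq (h := fun x => f x / G x)
    (hf.div hrep.aemeasurable.measurable_mk) ?_).congr_ae ?_⟩
  · filter_upwards [hfG] with x hx
    rw [abs_div]
    exact div_le_one_of_le₀ hx (abs_nonneg _)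
  · filter_upwards [hfG, hgG] with x hx hGx
    rw [hGx]
    exact (div_mul_cancel_of_imp fun h0 => by simpa [h0] using hx).symm

end IsBlockRep

theorem stmt7_general (n : ℕ) (p q : ℝ) (hq : 1 < q)
    (f : (Fin n → ℝ) → ℝ) (hf : Measurable f) :
    (MemBlockSpace n p q f ↔
      ∃ g, MemBlockSpace n p q g ∧ ∀ᵐ x : Fin n → ℝ, |f x| ≤ g x) ∧
    (∀ g, MemBlockSpace n p q g → (∀ᵐ x : Fin n → ℝ, |f x| ≤ g x) →
      blockNorm n p q f ≤ blockNorm n p q g) := by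
  have hq' := conjExp_nonneg hq
  refine ⟨⟨fun ⟨l, b, hrep⟩ => ⟨_, hrep.abs.memBlockSpace, hrep.abs_le⟩, ?_⟩, ?_⟩
  · rintro ⟨g, ⟨l, b, hrep⟩, hfg⟩
    obtain ⟨c, hc⟩ := hrep.of_abs_le hq' hf hfg
    exact hc.memBlockSpace
  · intro g _ hfg
    refine le_iInf₂ fun l b => le_iInf fun hrep => ?_
    obtain ⟨c, hc⟩ := hrep.of_abs_le hq' hf hfg
    exact hc.blockNorm_le

/-- A measurable f belongs to B^{p'}_{q'} iff it is dominated a.e. by some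
g ∈ B^{p'}_{q'}; in that case ‖f‖ ≤ ‖g‖ (solidity of block spaces). -/
theorem stmt7 (n : ℕ) (p q : ℝ) (hq : 1 < q) (hqp : q ≤ p)
    (f : (Fin n → ℝ) → ℝ) (hf : Measurable f) :
    (MemBlockSpace n p q f ↔
      ∃ g, MemBlockSpace n p q g ∧ ∀ᵐ x : Fin n → ℝ, |f x| ≤ g x) ∧
    (∀ g, MemBlockSpace n p q g → (∀ᵐ x : Fin n → ℝ, |f x| ≤ g x) →
      blockNorm n p q f ≤ blockNorm n p q g) :=
  stmt7_general n p q hq f hf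
end

section
/- Let 1 < q ≤ p < ∞, and let E ⊆ ℝⁿ have finite Lebesgue measure. Then χ_E has absolutely continuous norm in M^p_q(ℝⁿ): for every sequence of measurable sets F_k with χ_{F_k} → 0 pointwise a.e., one has ‖χ_E χ_{F_k}‖_{M^p_q} → 0. -/
/-!
On a cube `Q`, the Morrey quantity of `χ_A` is `|Q|^{1/p-1/q} |A ∩ Q|^{1/q}`; since
`|A ∩ Q| ≤ |Q|` and `1/p - 1/q ≤ 0`, it is at most `|A ∩ Q|^{1/p} ≤ |A|^{1/p}`. Hence
`‖χ_E χ_{F_k}‖_{M^p_q} ≤ |E ∩ F_k|^{1/p}`, and `|E ∩ F_k| → 0` by dominated convergence,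
`χ_E` being an integrable majorant.
-/

open MeasureTheory ENNReal Set Filter

theorem volume_cube (n : ℕ) (a : Fin n → ℝ) {s : ℝ} (hs : 0 ≤ s) :
    volume (cube n a s) = ENNReal.ofReal (s ^ n) := by
  simp [cube, volume_pi_pi, Real.volume_Ioo, ENNReal.ofReal_pow hs]

theorem ofReal_abs_indicator_one_rpow {α : Type*} (A : Set α) {q : ℝ} (hq : q ≠ 0) (x : α) :
    ENNReal.ofReal (|A.indicator (fun _ => (1 : ℝ)) x| ^ q) = A.indicator 1 x := by
  by_cases hx : x ∈ A <;> simp [hx, Real.zero_rpow hq]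

theorem setLIntegral_abs_indicator_one_rpow {α : Type*} [MeasurableSpace α] (μ : Measure α)
    {A : Set α} (hA : MeasurableSet A) {q : ℝ} (hq : q ≠ 0) (Q : Set α) :
    ∫⁻ x in Q, ENNReal.ofReal (|A.indicator (fun _ => (1 : ℝ)) x| ^ q) ∂μ = μ (A ∩ Q) := by
  simp_rw [ofReal_abs_indicator_one_rpow A hq, lintegral_indicator_one hA,
    Measure.restrict_apply hA]

theorem ENNReal.rpow_sub_mul_rpow_le {I V : ℝ≥0∞} (hIV : I ≤ V) (hV0 : V ≠ 0) (hVtop : V ≠ ⊤)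
    {p q : ℝ} (hq : 0 < q) (hqp : q ≤ p) :
    V ^ (1 / p - 1 / q) * I ^ (1 / q) ≤ I ^ (1 / p) := by
  set r := 1 / q - 1 / p
  have hr : 0 ≤ r := sub_nonneg.2 (one_div_le_one_div_of_le hq hqp)
  have hp : 0 ≤ 1 / p := by have := hq.trans_le hqp; positivity
  calc V ^ (1 / p - 1 / q) * I ^ (1 / q)
      = V ^ (-r) * I ^ r * I ^ (1 / p) := by
        rw [show 1 / p - 1 / q = -r by ring, show 1 / q = r + 1 / p by ring,
          ENNReal.rpow_add_of_nonneg _ _ hr hp, mul_assoc]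
    _ ≤ V ^ (-r) * V ^ r * I ^ (1 / p) := by gcongr
    _ = I ^ (1 / p) := by rw [← ENNReal.rpow_add _ _ hV0 hVtop]; simp

theorem morreyNorm_indicator_le (n : ℕ) {p q : ℝ} (hq : 0 < q) (hqp : q ≤ p)
    {A : Set (Fin n → ℝ)} (hA : MeasurableSet A) :
    morreyNorm n p q (A.indicator fun _ => (1 : ℝ)) ≤ volume A ^ (1 / p) := by
  refine iSup_le fun a => iSup_le fun s => iSup_le fun hs => ?_
  have hsn : 0 < s ^ n := pow_pos hs n
  rw [setLIntegral_abs_indicator_one_rpow _ hA hq.ne', ← ENNReal.ofReal_rpow_of_pos hsn]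
  calc ENNReal.ofReal (s ^ n) ^ (1 / p - 1 / q) * volume (A ∩ cube n a s) ^ (1 / q)
      ≤ volume (A ∩ cube n a s) ^ (1 / p) :=
        ENNReal.rpow_sub_mul_rpow_le ((measure_mono inter_subset_right).trans_eq
          (volume_cube n a hs.le)) (by simpa using hsn) ENNReal.ofReal_ne_top hq hqp
    _ ≤ volume A ^ (1 / p) := by
        have := hq.trans_le hqp
        gcongr
        exact inter_subset_left

theorem tendsto_measure_inter_of_ae_tendsto_indicator_zero {α : Type*} [MeasurableSpace α]
    {μ : Measure α} {E : Set α} (hE : MeasurableSet E) (hEfin : μ E < ⊤)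
    {F : ℕ → Set α} (hF : ∀ k, MeasurableSet (F k))
    (hlim : ∀ᵐ x ∂μ, Tendsto (fun k => (F k).indicator (fun _ => (1 : ℝ)) x) atTop (nhds 0)) :
    Tendsto (fun k => μ (E ∩ F k)) atTop (nhds 0) := by
  have hmem : ∀ᵐ x ∂μ, ∀ᶠ k in atTop, x ∈ E ∩ F k ↔ x ∈ (∅ : Set α) := by
    filter_upwards [hlim] with x hx
    have hx' := (tendsto_indicator_const_apply_iff_eventually atTop (1 : ℝ) x (A := ∅)).1
      (by simpa using hx)
    filter_upwards [hx'] with k hk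
    simp_all
  simpa using tendsto_measure_of_ae_tendsto_indicator atTop MeasurableSet.empty
    (fun k => hE.inter (hF k)) hE hEfin.ne (Eventually.of_forall fun k => inter_subset_left) hmem

/-- for any set E of finite measure, χ_E has absolutely continuous norm
in M^p_q: if χ_{F_k} → 0 a.e. then ‖χ_E χ_{F_k}‖_{M^p_q} → 0. -/
theorem stmt14 (n : ℕ) (p q : ℝ) (hq : 1 < q) (hqp : q ≤ p)
    (E : Set (Fin n → ℝ)) (hE : MeasurableSet E) (hEfin : volume E < ⊤)
    (F : ℕ → Set (Fin n → ℝ)) (hF : ∀ k, MeasurableSet (F k))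
    (hlim : ∀ᵐ x : Fin n → ℝ,
      Tendsto (fun k => (F k).indicator (fun _ => (1 : ℝ)) x) atTop (nhds 0)) :
    Tendsto (fun k => morreyNorm n p q ((E ∩ F k).indicator fun _ => (1 : ℝ)))
      atTop (nhds 0) := by
  have hq0 : 0 < q := one_pos.trans hq
  have hmeasure :=
    (tendsto_measure_inter_of_ae_tendsto_indicator_zero hE hEfin hF hlim).ennrpow_const (1 / p)
  rw [ENNReal.zero_rpow_of_pos (by have := hq0.trans_le hqp; positivity)] at hmeasure
  exact tendsto_of_tendsto_of_tendsto_of_le_of_le tendsto_const_nhds hmeasure (fun k => zero_le)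
    fun k => morreyNorm_indicator_le n hq0 hqp (hE.inter (hF k))
end
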